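/- Let n ≥ 1. For permutations β₁,…,β₉ of {1,…,2n}, the lattice functional F(β) := 4|γ_{n,n}⁻¹β₅| + |γ_{n,n}⁻¹β₄| + |γ_{n,n}⁻¹β₆| + 2(|β₁| + |β₃| + |β₄| + |β₆| + |β₇| + |β₉|) + 3(|β₂| + |β₈|) + Σ_{(i,j)∈E} |β_i⁻¹β_j|, where E = {(1,2),(2,3),(4,5),(5,6),(7,8),(8,9),(1,4),(4,7),(2,5),(5,8),(3,6),(6,9)}, attains the value 6(2n − 2) (its minimum) if and only if β₁ = β₂ = β₃ = β₄ = β₆ = β₇ = β₈ = β₉ = Id and Id ≤ β₅ ≤ γ_{n,n}. -/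

import Mathlib

/-!
For a permutation `σ` of a finite set of size `m`, `cycleCount σ` is the number of cycles
(fixed points count as cycles) and `permLen σ = m - cycleCount σ` (the minimal number of
transpositions needed to write `σ`).  We model `{1,…,2n}` as `Fin n ⊕ Fin n`, the first
summand being `{1,…,n}` and the second `{n+1,…,2n}`.  `gammaNN n` is the product of the
two `n`-cycles `(1,2,…,n)` and `(n+1,…,2n)`.
-/

/-- The number of cycles of a permutation, where fixed points count as cycles. -/
noncomputable def cycleCount {α : Type*} [Fintype α] [DecidableEq α]
    (σ : Equiv.Perm α) : ℕ :=
  Multiset.card σ.cycleType + (Fintype.card α - σ.support.card)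

/-- `|σ| = m - #(σ)`, the minimal number of transpositions whose product is `σ`. -/
noncomputable def permLen {α : Type*} [Fintype α] [DecidableEq α]
    (σ : Equiv.Perm α) : ℕ :=
  Fintype.card α - cycleCount σ

/-- `γ_{n,n}`: the product of the two `n`-cycles `(1,…,n)` and `(n+1,…,2n)`. -/
def gammaNN (n : ℕ) : Equiv.Perm (Fin n ⊕ Fin n) :=
  Equiv.sumCongr (finRotate n) (finRotate n)

/-- A permutation of `{1,…,2n}` is connected if some cycle of it contains both an
element of `{1,…,n}` and an element of `{n+1,…,2n}`. -/
def IsConnectedPerm {n : ℕ} (β : Equiv.Perm (Fin n ⊕ Fin n)) : Prop :=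
  ∃ a b : Fin n, β.SameCycle (Sum.inl a) (Sum.inr b)

/-- The geodesic partial order on permutations: `σ ≤ τ` iff `|σ| + |σ⁻¹τ| = |τ|`. -/
def permLe {α : Type*} [Fintype α] [DecidableEq α] (σ τ : Equiv.Perm α) : Prop :=
  permLen σ + permLen (σ⁻¹ * τ) = permLen τ

/-- The lattice functional for the 3×3 grid:
`F(β) = 4|γ_{n,n}⁻¹β₅| + |γ_{n,n}⁻¹β₄| + |γ_{n,n}⁻¹β₆|
  + 2(|β₁| + |β₃| + |β₄| + |β₆| + |β₇| + |β₉|) + 3(|β₂| + |β₈|)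
  + Σ_{(i,j)∈E} |βᵢ⁻¹βⱼ|` over the twelve grid edges `E`. -/
noncomputable def latticeF {n : ℕ}
    (b₁ b₂ b₃ b₄ b₅ b₆ b₇ b₈ b₉ : Equiv.Perm (Fin n ⊕ Fin n)) : ℕ :=
  4 * permLen ((gammaNN n)⁻¹ * b₅) + permLen ((gammaNN n)⁻¹ * b₄)
    + permLen ((gammaNN n)⁻¹ * b₆)
    + 2 * (permLen b₁ + permLen b₃ + permLen b₄ + permLen b₆ + permLen b₇ + permLen b₉)
    + 3 * (permLen b₂ + permLen b₈)
    + (permLen (b₁⁻¹ * b₂) + permLen (b₂⁻¹ * b₃) + permLen (b₄⁻¹ * b₅)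
      + permLen (b₅⁻¹ * b₆) + permLen (b₇⁻¹ * b₈) + permLen (b₈⁻¹ * b₉)
      + permLen (b₁⁻¹ * b₄) + permLen (b₄⁻¹ * b₇) + permLen (b₂⁻¹ * b₅)
      + permLen (b₅⁻¹ * b₈) + permLen (b₃⁻¹ * b₆) + permLen (b₆⁻¹ * b₉))

/-!
`permLen` is the length function of `Perm α` with respect to transpositions, so
`d(σ, τ) = |σ⁻¹τ|` is a metric: multiplying by a transposition changes the number of cycles
by one, hence `|swap a b * σ| ≤ |σ| + 1`. The functional `F(β)` dominates
`|β₂| + |β₃| + |β₄| + |β₆| + |β₇| + |β₈| + |β₉|` plus the lengths of six paths from `Id` to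
`γ = γ_{n,n}` through the grid, each of length at least `|γ| = 2n - 2`. So at the minimum all
those `βᵢ` are `Id`, and then `F = 4(|β₅| + |γ⁻¹β₅|) + 4|β₁| + 2|γ|`, which equals `6|γ|`
exactly when `β₁ = Id` and `β₅` lies on a geodesic from `Id` to `γ`.
-/

open Equiv Equiv.Perm

section PermLen

variable {α : Type*} [Fintype α] [DecidableEq α]

theorem two_mul_card_cycleType_le (σ : Perm α) :
    2 * Multiset.card σ.cycleType ≤ σ.support.card := by
  rw [← σ.sum_cycleType, mul_comm, ← smul_eq_mul]
  exact Multiset.card_nsmul_le_sum fun _ ↦ two_le_of_mem_cycleType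

theorem permLen_eq_card_support_sub (σ : Perm α) :
    permLen σ = σ.support.card - Multiset.card σ.cycleType := by
  have := σ.support.card_le_univ
  have := two_mul_card_cycleType_le σ
  unfold permLen cycleCount
  omega

theorem permLen_eq_sum_cycleType_sub_card (σ : Perm α) :
    permLen σ = σ.cycleType.sum - Multiset.card σ.cycleType := by
  rw [permLen_eq_card_support_sub, sum_cycleType]

@[simp]
theorem permLen_one : permLen (1 : Perm α) = 0 := by
  simp [permLen_eq_card_support_sub]

theorem permLen_eq_zero_iff {σ : Perm α} : permLen σ = 0 ↔ σ = 1 := by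
  have := two_mul_card_cycleType_le σ
  rw [permLen_eq_card_support_sub, ← card_support_eq_zero]
  omega

@[simp]
theorem permLen_inv (σ : Perm α) : permLen σ⁻¹ = permLen σ := by
  rw [permLen_eq_card_support_sub, permLen_eq_card_support_sub, cycleType_inv, support_inv]

theorem permLen_le_card_support_sub_one {σ : Perm α} (h : σ ≠ 1) :
    permLen σ ≤ σ.support.card - 1 := by
  have : Multiset.card σ.cycleType ≠ 0 := by simpa [card_cycleType_eq_zero]
  rw [permLen_eq_card_support_sub]
  omega

theorem Equiv.Perm.Disjoint.permLen_mul {σ τ : Perm α} (h : σ.Disjoint τ) :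
    permLen (σ * τ) = permLen σ + permLen τ := by
  have := two_mul_card_cycleType_le σ
  have := two_mul_card_cycleType_le τ
  simp only [permLen_eq_card_support_sub, h.cycleType_mul, h.card_support_mul, Multiset.card_add]
  omega

theorem Equiv.Perm.IsCycle.permLen_eq {c : Perm α} (h : c.IsCycle) :
    permLen c = c.support.card - 1 := by
  rw [permLen_eq_card_support_sub, h.cycleType, Multiset.card_singleton]

theorem permLen_swap {a b : α} (hab : a ≠ b) : permLen (swap a b) = 1 := by
  rw [(isCycle_swap hab).permLen_eq, card_support_swap hab]

theorem sign_eq_neg_one_pow_permLen (σ : Perm α) : sign σ = (-1) ^ permLen σ := by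
  have h : σ.support.card + Multiset.card σ.cycleType =
      permLen σ + 2 * Multiset.card σ.cycleType := by
    have := two_mul_card_cycleType_le σ
    rw [permLen_eq_card_support_sub]
    omega
  rw [sign_of_cycleType, sum_cycleType, h, pow_add, pow_mul]
  simp

theorem Equiv.Perm.IsCycle.permLen_swap_mul_add_one {c : Perm α} (hc : c.IsCycle) {x : α}
    (hx : c x ≠ x) : permLen (swap x (c x) * c) + 1 = permLen c := by
  by_cases hcx : c (c x) = x
  · have hsw := hc.eq_swap_of_apply_apply_eq_self hx hcx
    have h1 : swap x (c x) * c = 1 := by nth_rw 2 [hsw]; exact swap_mul_self ..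
    rw [h1, permLen_one, hc.permLen_eq, card_support_eq_two.mpr ⟨x, c x, hx.symm, hsw⟩]
  · rw [(hc.swap_mul hx hcx).permLen_eq, hc.permLen_eq, support_swap_mul_eq c x hcx,
      Finset.card_sdiff_of_subset (by simpa using hx), Finset.card_singleton]
    have := hc.two_le_card_support
    omega

theorem permLen_swap_mul_add_one {σ : Perm α} {x : α} (hx : σ x ≠ x) :
    permLen (swap x (σ x) * σ) + 1 = permLen σ := by
  set c := σ.cycleOf x
  set ρ := σ * c⁻¹
  have hc : c ∈ σ.cycleFactorsFinset :=
    cycleOf_mem_cycleFactorsFinset_iff.mpr (mem_support.mpr hx)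
  have hdisj : c.Disjoint ρ := (disjoint_mul_inv_of_mem_cycleFactorsFinset hc).symm
  have hσ : σ = c * ρ := by rw [hdisj.commute.eq, inv_mul_cancel_right]
  have hcx : c x = σ x := cycleOf_apply_self σ x
  have hdisj' : (swap x (c x) * c).Disjoint ρ :=
    hdisj.mono (fun _ hy ↦ (mem_support_swap_mul_imp_mem_support_ne hy).1) le_rfl
  have hcyc := (isCycle_cycleOf σ hx).permLen_swap_mul_add_one (hcx ▸ hx)
  calc permLen (swap x (σ x) * σ) + 1 = permLen (swap x (c x) * c) + 1 + permLen ρ := by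
        rw [add_right_comm, ← hdisj'.permLen_mul, mul_assoc, ← hσ, hcx]
    _ = permLen σ := by rw [hcyc, ← hdisj.permLen_mul, ← hσ]

theorem odd_permLen_swap_mul_add_permLen {a b : α} (hab : a ≠ b) (σ : Perm α) :
    Odd (permLen (swap a b * σ) + permLen σ) := by
  by_contra h
  have h1 : sign (swap a b * σ) * sign σ = 1 := by
    rw [sign_eq_neg_one_pow_permLen, sign_eq_neg_one_pow_permLen, ← pow_add,
      (Nat.not_odd_iff_even.mp h).neg_one_pow]
  simp [sign_swap hab] at h1

theorem permLen_swap_mul_le {a b : α} (hab : a ≠ b) (σ : Perm α) :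
    permLen (swap a b * σ) ≤ permLen σ + 1 := by
  by_cases hfar : ∃ x, σ x ≠ x ∧ x ≠ a ∧ x ≠ b ∧ σ x ≠ a ∧ σ x ≠ b
  · obtain ⟨x, hx, hxa, hxb, hσxa, hσxb⟩ := hfar
    have hcomm : Commute (swap x (σ x)) (swap a b) := by
      refine Disjoint.commute ?_
      rw [disjoint_iff_disjoint_support, support_swap hx.symm, support_swap hab]
      simp [*, Ne.symm hxa, Ne.symm hxb, Ne.symm hσxa, Ne.symm hσxb]
    have hτx : (swap a b * σ) x = σ x := by simp [swap_apply_of_ne_of_ne hσxa hσxb]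
    have h1 := permLen_swap_mul_add_one hx
    have h2 := permLen_swap_mul_add_one (σ := swap a b * σ) (x := x) (by rwa [hτx])
    rw [hτx, ← mul_assoc, hcomm.eq, mul_assoc] at h2
    have := permLen_swap_mul_le hab (swap x (σ x) * σ)
    omega
  · -- Here `σ` and `swap a b * σ` move only points of `S`, so both have length at most 3, and
    -- parity rules out `|swap a b * σ| = 3` when `|σ| = 1`.
    push Not at hfar
    set S : Finset α := {a, b, σ⁻¹ a, σ⁻¹ b}
    have hσS : σ.support ⊆ S := fun y hy ↦ by
      have := hfar y (mem_support.mp hy)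
      simp only [S, Finset.mem_insert, Finset.mem_singleton, Perm.eq_inv_iff_eq]
      tauto
    have hτS : (swap a b * σ).support ⊆ S :=
      (support_mul_le _ _).trans (Finset.union_subset (by simp [support_swap hab, S,
        Finset.insert_subset_iff]) hσS)
    rcases eq_or_ne σ 1 with rfl | hσ
    · simp [permLen_swap hab]
    rcases eq_or_ne (swap a b * σ) 1 with hτ | hτ
    · simp [hτ]
    have := permLen_le_card_support_sub_one hτ
    have := Finset.card_le_card hτS
    have : S.card ≤ 4 := Finset.card_le_four
    have := permLen_eq_zero_iff.not.mpr hσ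
    have := Nat.odd_iff.mp (odd_permLen_swap_mul_add_permLen hab σ)
    omega
termination_by σ.support.card
decreasing_by exact card_support_swap_mul hx

theorem permLen_mul_le (σ τ : Perm α) : permLen (σ * τ) ≤ permLen σ + permLen τ := by
  rcases eq_or_ne σ 1 with rfl | hσ
  · simp
  obtain ⟨x, hx⟩ : ∃ x, σ x ≠ x := by simpa [Perm.ext_iff] using hσ
  have h1 := permLen_swap_mul_add_one hx
  have h2 := permLen_swap_mul_le (Ne.symm hx) (swap x (σ x) * (σ * τ))
  rw [swap_mul_self_mul] at h2
  have := permLen_mul_le (swap x (σ x) * σ) τ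
  rw [mul_assoc] at this
  omega
termination_by σ.support.card
decreasing_by exact card_support_swap_mul hx

@[simp]
theorem permLe_one_left (σ : Perm α) : permLe 1 σ := by
  simp [permLe]

theorem permLen_inv_mul_comm (σ τ : Perm α) : permLen (σ⁻¹ * τ) = permLen (τ⁻¹ * σ) := by
  rw [← permLen_inv, mul_inv_rev, inv_inv]

theorem permLen_le_permLen_add_permLen_inv_mul (σ τ : Perm α) :
    permLen τ ≤ permLen σ + permLen (σ⁻¹ * τ) := by
  simpa using permLen_mul_le σ (σ⁻¹ * τ)

theorem permLen_le_permLen_add_permLen_inv_mul' (σ τ : Perm α) :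
    permLen σ ≤ permLen τ + permLen (σ⁻¹ * τ) := by
  simpa [permLen_inv_mul_comm σ] using permLen_le_permLen_add_permLen_inv_mul τ σ

theorem permLen_extendDomain {β : Type*} [Fintype β] [DecidableEq β] {p : β → Prop}
    [DecidablePred p] (σ : Perm α) (f : α ≃ Subtype p) :
    permLen (σ.extendDomain f) = permLen σ := by
  simp only [permLen_eq_sum_cycleType_sub_card, cycleType_extendDomain]

theorem permLen_sumCongr {β : Type*} [Fintype β] [DecidableEq β] (σ : Perm α) (τ : Perm β) :
    permLen (σ.sumCongr τ) = permLen σ + permLen τ := by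
  have hσ : σ.sumCongr 1 = σ.extendDomain (sumIsLeft (β := β)).symm := by
    ext (a | b)
    · exact (extendDomain_apply_image σ (sumIsLeft (β := β)).symm a).symm
    · simp [extendDomain_apply_not_subtype]
  have hτ : (1 : Perm α).sumCongr τ = τ.extendDomain (sumIsRight (α := α)).symm := by
    ext (a | b)
    · simp [extendDomain_apply_not_subtype]
    · exact (extendDomain_apply_image τ (sumIsRight (α := α)).symm b).symm
  have hdisj : (σ.sumCongr 1).Disjoint ((1 : Perm α).sumCongr τ) := by
    rintro (a | b) <;> simp
  have hmul : σ.sumCongr τ = σ.sumCongr 1 * (1 : Perm α).sumCongr τ := by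
    rw [sumCongr_mul, mul_one, one_mul]
  rw [hmul, hdisj.permLen_mul, hσ, hτ, permLen_extendDomain, permLen_extendDomain]

end PermLen

theorem permLen_finRotate (n : ℕ) : permLen (finRotate n) = n - 1 := by
  match n with
  | 0 | 1 => exact permLen_eq_zero_iff.mpr (Subsingleton.elim _ _)
  | n + 2 => simp [permLen_eq_sum_cycleType_sub_card, cycleType_finRotate]

theorem permLen_gammaNN (n : ℕ) : permLen (gammaNN n) = 2 * n - 2 := by
  have := permLen_sumCongr (finRotate n) (finRotate n)
  rw [permLen_finRotate] at this
  exact this.trans (by omega)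

theorem six_mul_permLen_gammaNN_add_le_latticeF {n : ℕ}
    (b₁ b₂ b₃ b₄ b₅ b₆ b₇ b₈ b₉ : Perm (Fin n ⊕ Fin n)) :
    6 * permLen (gammaNN n) + (permLen b₂ + permLen b₃ + permLen b₄ + permLen b₆ + permLen b₇
      + permLen b₈ + permLen b₉) ≤ latticeF b₁ b₂ b₃ b₄ b₅ b₆ b₇ b₈ b₉ := by
  -- triangle inequalities along the paths `1-b₁-b₂-b₅-γ`, `1-b₇-b₈-b₅-γ`, `1-b₄-b₅-γ`,
  -- `1-b₆-b₅-γ`, `1-b₁-b₄-γ` and `1-b₉-b₆-γ` from `1` to `γ = gammaNN n`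
  have := permLen_le_permLen_add_permLen_inv_mul' (gammaNN n) b₅
  have := permLen_le_permLen_add_permLen_inv_mul' (gammaNN n) b₄
  have := permLen_le_permLen_add_permLen_inv_mul' (gammaNN n) b₆
  have := permLen_le_permLen_add_permLen_inv_mul b₁ b₂
  have := permLen_le_permLen_add_permLen_inv_mul b₂ b₅
  have := permLen_le_permLen_add_permLen_inv_mul b₄ b₅
  have := permLen_le_permLen_add_permLen_inv_mul' b₅ b₆
  have := permLen_le_permLen_add_permLen_inv_mul b₇ b₈
  have := permLen_le_permLen_add_permLen_inv_mul' b₅ b₈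
  have := permLen_le_permLen_add_permLen_inv_mul b₁ b₄
  have := permLen_le_permLen_add_permLen_inv_mul' b₆ b₉
  unfold latticeF
  omega

theorem latticeF_eq_min_iff_general (n : ℕ)
    (b₁ b₂ b₃ b₄ b₅ b₆ b₇ b₈ b₉ : Equiv.Perm (Fin n ⊕ Fin n)) :
    latticeF b₁ b₂ b₃ b₄ b₅ b₆ b₇ b₈ b₉ = 6 * (2 * n - 2) ↔
      (b₁ = 1 ∧ b₂ = 1 ∧ b₃ = 1 ∧ b₄ = 1 ∧ b₆ = 1 ∧ b₇ = 1 ∧ b₈ = 1 ∧ b₉ = 1) ∧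
        permLe 1 b₅ ∧ permLe b₅ (gammaNN n) := by
  rw [← permLen_gammaNN]
  simp only [permLe_one_left, true_and]
  rw [permLe, permLen_inv_mul_comm b₅]
  constructor
  · intro h
    have hlow := six_mul_permLen_gammaNN_add_le_latticeF b₁ b₂ b₃ b₄ b₅ b₆ b₇ b₈ b₉
    obtain ⟨rfl, rfl, rfl, rfl, rfl, rfl, rfl⟩ :
        b₂ = 1 ∧ b₃ = 1 ∧ b₄ = 1 ∧ b₆ = 1 ∧ b₇ = 1 ∧ b₈ = 1 ∧ b₉ = 1 := by
      simp only [← permLen_eq_zero_iff]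
      omega
    have hγ := permLen_le_permLen_add_permLen_inv_mul' (gammaNN n) b₅
    simp only [latticeF, mul_one, permLen_inv, permLen_one, add_zero, mul_zero, inv_one,
      one_mul] at h
    have hb₁ : b₁ = 1 := permLen_eq_zero_iff.mp (by omega)
    exact ⟨⟨hb₁, rfl, rfl, rfl, rfl, rfl, rfl, rfl⟩, by omega⟩
  · rintro ⟨⟨rfl, rfl, rfl, rfl, rfl, rfl, rfl, rfl⟩, h₅⟩
    simp only [latticeF, mul_one, permLen_inv, permLen_one, add_zero, mul_zero, inv_one, one_mul,
      zero_add]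
    omega

/-- The lattice functional attains its minimum `6(2n-2)` exactly when
`β₁ = β₂ = β₃ = β₄ = β₆ = β₇ = β₈ = β₉ = Id` and `Id ≤ β₅ ≤ γ_{n,n}`. -/
theorem latticeF_eq_min_iff (n : ℕ) (hn : 1 ≤ n)
    (b₁ b₂ b₃ b₄ b₅ b₆ b₇ b₈ b₉ : Equiv.Perm (Fin n ⊕ Fin n)) :
    latticeF b₁ b₂ b₃ b₄ b₅ b₆ b₇ b₈ b₉ = 6 * (2 * n - 2) ↔
      (b₁ = 1 ∧ b₂ = 1 ∧ b₃ = 1 ∧ b₄ = 1 ∧ b₆ = 1 ∧ b₇ = 1 ∧ b₈ = 1 ∧ b₉ = 1) ∧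
        permLe 1 b₅ ∧ permLe b₅ (gammaNN n) :=
  latticeF_eq_min_iff_general n b₁ b₂ b₃ b₄ b₅ b₆ b₇ b₈ b₉
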